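/- arXiv:0707.2985 — 2 statements merged into one kernel-verified Lean document; each statement's English description precedes it below -/
import Mathlib

section
/- Let η ∈ c₀* with η_n > 0 for all n. Then the sequence H_n − (η_{a²})_n/(η_a)_n is strictly increasing in n. -/
open Finset Filter Real

/-- First-order arithmetic mean: (ξ_a)_n = (1/n) ∑_{j=1}^n ξ_j. -/
noncomputable def am (ξ : ℕ → ℝ) (n : ℕ) : ℝ := (∑ j ∈ Finset.Icc 1 n, ξ j) / n

/-- Second-order arithmetic mean. -/
noncomputable def am2 (ξ : ℕ → ℝ) : ℕ → ℝ := am (am ξ)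

/-- Harmonic numbers H_n = ∑_{j=1}^n 1/j. -/
noncomputable def harm (n : ℕ) : ℝ := ∑ j ∈ Finset.Icc 1 n, (1 : ℝ) / j

/-! The normalising factors `1/n` cancel in `am2 ξ n / am ξ n`, leaving `T n / S n` with
`S n = ∑_{j ≤ n} ξ j` and `T n = ∑_{j ≤ n} (ξ_a)_j`. Since `T (n+1) = T n + S (n+1)/(n+1)`, the
increment `1/(n+1)` of `H` is exactly absorbed and `H_{n+1} - T (n+1)/S (n+1) = H_n - T n / S (n+1)`,
which exceeds `H_n - T n / S n` because `S` is strictly increasing and `T n > 0`. -/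

theorem harm_succ (n : ℕ) : harm (n + 1) = harm n + 1 / (n + 1) := by
  rw [harm, harm, sum_Icc_succ_top (Nat.le_add_left 1 n)]
  push_cast
  ring

theorem sum_Icc_pos_of_pos {ξ : ℕ → ℝ} (hξ : ∀ j, 1 ≤ j → 0 < ξ j) {n : ℕ} (hn : 1 ≤ n) :
    0 < ∑ j ∈ Icc 1 n, ξ j :=
  sum_pos (fun j hj => hξ j (mem_Icc.mp hj).1) ⟨1, mem_Icc.mpr ⟨le_rfl, hn⟩⟩

theorem am_pos {ξ : ℕ → ℝ} (hξ : ∀ j, 1 ≤ j → 0 < ξ j) {n : ℕ} (hn : 1 ≤ n) : 0 < am ξ n :=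
  div_pos (sum_Icc_pos_of_pos hξ hn) (by exact_mod_cast hn)

theorem am2_div_am (ξ : ℕ → ℝ) (n : ℕ) :
    am2 ξ n / am ξ n = (∑ j ∈ Icc 1 n, am ξ j) / ∑ j ∈ Icc 1 n, ξ j := by
  rcases eq_or_ne n 0 with rfl | hn
  · simp [am2, am]
  · exact div_div_div_cancel_right₀ (Nat.cast_ne_zero.mpr hn) _ _

theorem harm_succ_sub_am2_div_am (ξ : ℕ → ℝ) {n : ℕ} (h : ∑ j ∈ Icc 1 (n + 1), ξ j ≠ 0) :
    harm (n + 1) - am2 ξ (n + 1) / am ξ (n + 1) =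
      harm n - (∑ j ∈ Icc 1 n, am ξ j) / ∑ j ∈ Icc 1 (n + 1), ξ j := by
  rw [harm_succ, am2_div_am, sum_Icc_succ_top (Nat.le_add_left 1 n) (am ξ), am]
  push_cast
  field_simp
  ring

theorem stmt_9_general (η : ℕ → ℝ)
    (hpos : ∀ n : ℕ, 1 ≤ n → 0 < η n) :
    ∀ n : ℕ, 1 ≤ n →
      harm n - am2 η n / am η n < harm (n + 1) - am2 η (n + 1) / am η (n + 1) := by
  intro n hn
  have hS : 0 < ∑ j ∈ Icc 1 n, η j := sum_Icc_pos_of_pos hpos hn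
  have hS_lt : ∑ j ∈ Icc 1 n, η j < ∑ j ∈ Icc 1 (n + 1), η j := by
    rw [sum_Icc_succ_top (by omega)]
    linarith [hpos (n + 1) (by omega)]
  have hT : 0 < ∑ j ∈ Icc 1 n, am η j := sum_Icc_pos_of_pos (fun j hj => am_pos hpos hj) hn
  rw [harm_succ_sub_am2_div_am η (hS.trans hS_lt).ne', am2_div_am]
  gcongr

theorem stmt_9 (η : ℕ → ℝ)
    (hmono : ∀ n : ℕ, 1 ≤ n → η (n + 1) ≤ η n)
    (hpos : ∀ n : ℕ, 1 ≤ n → 0 < η n)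
    (hlim : Tendsto η atTop (nhds 0)) :
    ∀ n : ℕ, 1 ≤ n →
      harm n - am2 η n / am η n < harm (n + 1) - am2 η (n + 1) / am η (n + 1) :=
  stmt_9_general η hpos
end

section
/- For η ∈ c₀* with all η_n > 0 and for all n ≥ m: (m/n)((η_{a²})_m + (H_n − H_m)(η_a)_m) ≤ (η_{a²})_n ≤ (m/n)(η_{a²})_m + (H_n − H_m)(η_a)_n. -/
open Finset Filter Real

/-!
Writing `S_k = k (η_a)_k` for the partial sums, `n (η_{a²})_n = m (η_{a²})_m + ∑_{m<j≤n} S_j / j`.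
Since `η ≥ 0`, `S` is nondecreasing, so `S_m ≤ S_j ≤ S_n` for `m < j ≤ n`; summing `S_j / j`
between these bounds produces the factor `∑_{m<j≤n} 1/j = H_n - H_m`, and dividing by `n` gives
both inequalities.
-/

theorem sum_Icc_one_eq_add_sum_Ioc {M : Type*} [AddCommMonoid M] (f : ℕ → M) {m n : ℕ}
    (h : m ≤ n) : ∑ j ∈ Icc 1 n, f j = ∑ j ∈ Icc 1 m, f j + ∑ j ∈ Ioc m n, f j := by
  rw [← zero_add 1, Icc_add_one_left_eq_Ioc, Icc_add_one_left_eq_Ioc]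
  exact (sum_Ioc_consecutive f m.zero_le h).symm

theorem harm_sub_harm {m n : ℕ} (h : m ≤ n) : harm n - harm m = ∑ j ∈ Ioc m n, (1 : ℝ) / j := by
  rw [harm, harm, sum_Icc_one_eq_add_sum_Ioc _ h, add_sub_cancel_left]

theorem natCast_mul_am (ξ : ℕ → ℝ) (k : ℕ) : (k : ℝ) * am ξ k = ∑ j ∈ Icc 1 k, ξ j := by
  rcases k.eq_zero_or_pos with rfl | hk
  · simp
  · exact mul_div_cancel₀ _ (by positivity)

theorem am_eq_natCast_mul_am_div (ξ : ℕ → ℝ) (k : ℕ) : am ξ k = k * am ξ k / k := by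
  rw [natCast_mul_am, am]

theorem natCast_mul_am_eq_add_sum_Ioc (ξ : ℕ → ℝ) {m n : ℕ} (h : m ≤ n) :
    (n : ℝ) * am ξ n = m * am ξ m + ∑ j ∈ Ioc m n, ξ j := by
  rw [natCast_mul_am, natCast_mul_am, sum_Icc_one_eq_add_sum_Ioc _ h]

section Nonneg

variable {ξ : ℕ → ℝ} (hξ : ∀ j, 1 ≤ j → 0 ≤ ξ j)
include hξ

theorem natCast_mul_am_le_of_le {i k : ℕ} (h : i ≤ k) : (i : ℝ) * am ξ i ≤ k * am ξ k := by
  rw [natCast_mul_am, natCast_mul_am]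
  exact sum_le_sum_of_subset_of_nonneg (Icc_subset_Icc_right h)
    fun j hj _ ↦ hξ j (mem_Icc.mp hj).1

theorem harm_sub_harm_mul_le_sum_am {m n : ℕ} (h : m ≤ n) :
    (harm n - harm m) * (m * am ξ m) ≤ ∑ j ∈ Ioc m n, am ξ j := by
  rw [harm_sub_harm h, sum_mul]
  gcongr with j hj
  rw [one_div_mul_eq_div, am_eq_natCast_mul_am_div ξ j]
  exact div_le_div_of_nonneg_right (natCast_mul_am_le_of_le hξ (mem_Ioc.mp hj).1.le)
    j.cast_nonneg

theorem sum_am_le_harm_sub_harm_mul {m n : ℕ} (h : m ≤ n) :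
    ∑ j ∈ Ioc m n, am ξ j ≤ (harm n - harm m) * (n * am ξ n) := by
  rw [harm_sub_harm h, sum_mul]
  gcongr with j hj
  rw [one_div_mul_eq_div, am_eq_natCast_mul_am_div ξ j]
  exact div_le_div_of_nonneg_right (natCast_mul_am_le_of_le hξ (mem_Ioc.mp hj).2)
    j.cast_nonneg

end Nonneg

theorem stmt_12_general (η : ℕ → ℝ)
    (hpos : ∀ n : ℕ, 1 ≤ n → 0 < η n) :
    ∀ m n : ℕ, 1 ≤ m → m ≤ n →
      ((m : ℝ) / n) * (am2 η m + (harm n - harm m) * am η m) ≤ am2 η n ∧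
      am2 η n ≤ ((m : ℝ) / n) * am2 η m + (harm n - harm m) * am η n := by
  intro m n hm hmn
  have hη : ∀ j, 1 ≤ j → 0 ≤ η j := fun j hj ↦ (hpos j hj).le
  have hn : (n : ℝ) ≠ 0 := by positivity [hm.trans hmn]
  have hsplit : (n : ℝ) * am2 η n = m * am2 η m + ∑ j ∈ Ioc m n, am η j :=
    natCast_mul_am_eq_add_sum_Ioc (am η) hmn
  constructor
  · calc (m : ℝ) / n * (am2 η m + (harm n - harm m) * am η m)
        = (m * am2 η m + (harm n - harm m) * (m * am η m)) / n := by ring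
      _ ≤ (m * am2 η m + ∑ j ∈ Ioc m n, am η j) / n := by
        gcongr; exact harm_sub_harm_mul_le_sum_am hη hmn
      _ = am2 η n := by rw [← hsplit, mul_div_cancel_left₀ _ hn]
  · calc am2 η n = (m * am2 η m + ∑ j ∈ Ioc m n, am η j) / n := by
          rw [← hsplit, mul_div_cancel_left₀ _ hn]
      _ ≤ (m * am2 η m + (harm n - harm m) * (n * am η n)) / n := by
        gcongr; exact sum_am_le_harm_sub_harm_mul hη hmn
      _ = (m : ℝ) / n * am2 η m + (harm n - harm m) * am η n := by field_simp

theorem stmt_12 (η : ℕ → ℝ)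
    (hmono : ∀ n : ℕ, 1 ≤ n → η (n + 1) ≤ η n)
    (hpos : ∀ n : ℕ, 1 ≤ n → 0 < η n)
    (hlim : Tendsto η atTop (nhds 0)) :
    ∀ m n : ℕ, 1 ≤ m → m ≤ n →
      ((m : ℝ) / n) * (am2 η m + (harm n - harm m) * am η m) ≤ am2 η n ∧
      am2 η n ≤ ((m : ℝ) / n) * am2 η m + (harm n - harm m) * am η n :=
  stmt_12_general η hpos
end
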